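/- Under the random choice of the shift parameter β, the event that the shifted cube I+β is bad is independent of the position of I+β; more precisely, the badness of I+β is measurable with respect to the coordinates (β_j)_{2^{-j} ≥ ℓ(I)}, while the position I+β is measurable with respect to (β_j)_{2^{-j} < ℓ(I)}, and these two families of coordinates are independent. -/

import Mathlib

/-!
Everything is translated by the position vector `shiftVec j β` of `I + β`. After this
translation, the position of `I + β` inside its `k`-th ancestor is governed by
`shiftVec (j - k) β - shiftVec j β`, a finite sum over the coordinates `β_m` with
`j - k < m ≤ j`. So badness is a countable union of events, each depending on finitely many
coordinates `β_m` with `m ≤ j`, while the position `shiftVec j β` only involves the coordinates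
with `m > j`. Disjoint blocks of an independent family generate independent σ-algebras.
-/

open MeasureTheory Set ProbabilityTheory

noncomputable section

/-- The (shifted) dyadic cube of generation `j` (sidelength `2^(-j)`) at position `q`,
translated by the vector `v`. -/
def dyCube {n : ℕ} (j : ℤ) (q : Fin n → ℤ) (v : Fin n → ℝ) : Set (Fin n → ℝ) :=
  Set.univ.pi fun i => Set.Ico ((2:ℝ)^(-j) * q i + v i) ((2:ℝ)^(-j) * (q i + 1) + v i)

/-- The translation vector `∑_{i : 2^{-i} < 2^{-j}} 2^{-i} β_i` determining the position of the
shift of a cube of generation `j` by the shift parameter `β`. -/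
def shiftVec {n : ℕ} (j : ℤ) (β : ℤ → Fin n → Fin 2) : Fin n → ℝ :=
  fun i => ∑' k : ℤ, if j < k then (2:ℝ)^(-k) * ((β k i : ℕ) : ℝ) else 0

/-- Distance between two sets in `ℝ^n`. -/
def setDist {n : ℕ} (s t : Set (Fin n → ℝ)) : ℝ :=
  (⨅ x ∈ s, EMetric.infEdist x t).toReal

/-- The cube `I + β` of generation `j` at position `q` is "bad" with parameters `r, γ` in the
shifted dyadic system `𝒟^β`: some dyadic ancestor `J = (I+β)^(k)`, `k ≥ r`, satisfies
`dist(I+β, Jᶜ) ≤ ℓ(I)^γ ℓ(J)^(1-γ)`. -/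
def BadCube {n : ℕ} (r : ℕ) (γ : ℝ) (β : ℤ → Fin n → Fin 2) (j : ℤ) (q : Fin n → ℤ) : Prop :=
  ∃ k : ℕ, r ≤ k ∧ ∃ q' : Fin n → ℤ,
    dyCube j q (shiftVec j β) ⊆ dyCube (j - k) q' (shiftVec (j - k) β) ∧
    setDist (dyCube j q (shiftVec j β)) (dyCube (j - k) q' (shiftVec (j - k) β))ᶜ
      ≤ ((2:ℝ)^(-j)) ^ γ * ((2:ℝ)^(-(j - (k:ℤ)))) ^ (1 - γ)

section DependsOn

variable {ι X Z : Type*} [Inhabited X]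

open Classical in
def Set.extendByDefault (s : Set ι) (y : s → X) : ι → X :=
  fun i => if h : i ∈ s then y ⟨i, h⟩ else default

lemma Set.measurable_extendByDefault [MeasurableSpace X] (s : Set ι) :
    Measurable (s.extendByDefault (X := X)) := by
  refine measurable_pi_lambda _ fun i => ?_
  by_cases h : i ∈ s
  · simpa [Set.extendByDefault, h] using measurable_pi_apply (⟨i, h⟩ : s)
  · simp only [Set.extendByDefault, h, dite_false]
    exact measurable_const

lemma DependsOn.comp_extendByDefault {f : (ι → X) → Z} {s : Set ι} (hf : DependsOn f s)
    (x : ι → X) : f (s.extendByDefault (s.domRestrict x)) = f x :=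
  hf fun i hi => by simp [Set.extendByDefault, hi]

variable [MeasurableSpace X] [MeasurableSpace Z] {f : (ι → X) → Z} {s : Set ι}

lemma DependsOn.measurable_of_finite [Countable X] [MeasurableSingletonClass X] [Finite s]
    (hf : DependsOn f s) : Measurable f := by
  have hcomp : (f ∘ s.extendByDefault) ∘ s.domRestrict = f := funext hf.comp_extendByDefault
  rw [← hcomp]
  exact (measurable_of_countable _).comp s.measurable_restrict

lemma DependsOn.measurable_comap_restrict {Ω : Type*} (hf : DependsOn f s) (hfm : Measurable f)
    (B : ι → Ω → X) :
    Measurable[MeasurableSpace.comap (fun ω (i : s) => B i ω) inferInstance]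
      fun ω => f fun i => B i ω := by
  have hcomp : (fun ω => f fun i => B i ω) = (f ∘ s.extendByDefault) ∘ fun ω (i : s) => B i ω :=
    funext fun ω => (hf.comp_extendByDefault _).symm
  rw [hcomp]
  exact (hfm.comp s.measurable_extendByDefault).comp (comap_measurable _)

end DependsOn

lemma ProbabilityTheory.iIndepFun.indep_comap_of_disjoint {Ω ι : Type*} {mΩ : MeasurableSpace Ω}
    {P : Measure Ω} {β : ι → Type*} [∀ i, MeasurableSpace (β i)] {f : ∀ i, Ω → β i}
    (hf : iIndepFun f P) (hmeas : ∀ i, Measurable (f i)) {S T : Set ι} (hST : Disjoint S T) :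
    Indep (MeasurableSpace.comap (fun ω (i : S) => f i ω) inferInstance)
      (MeasurableSpace.comap (fun ω (i : T) => f i ω) inferInstance) P := by
  have := indep_iSup_of_disjoint (fun i => (hmeas i).comap_le) hf hST
  rwa [iSup_subtype', iSup_subtype', ← MeasurableSpace.comap_process_pi,
    ← MeasurableSpace.comap_process_pi] at this

lemma summable_ite_lt_zpow_two (j : ℤ) :
    Summable fun k : ℤ => if j < k then (2:ℝ) ^ (-k) else 0 := by
  have hinj : Function.Injective fun m : ℕ => j + 1 + m := fun a b h => by simpa using h
  have hsupp : ∀ k ∉ range fun m : ℕ => j + 1 + m, (if j < k then (2:ℝ) ^ (-k) else 0) = 0 :=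
    fun k hk => if_neg fun _ => hk ⟨(k - j - 1).toNat, by simp only; omega⟩
  refine (hinj.summable_iff hsupp).mp <|
    (summable_geometric_two.mul_left ((2:ℝ) ^ (-(j + 1)))).congr fun m => ?_
  rw [Function.comp_apply, if_pos (by omega), neg_add (j + 1) (m:ℤ), zpow_add₀ two_ne_zero,
    zpow_neg (2:ℝ) (m:ℤ), zpow_natCast, one_div, inv_pow]

section ShiftedCubes

variable {n : ℕ}

lemma summable_shiftVec_term (j : ℤ) (β : ℤ → Fin n → Fin 2) (i : Fin n) :
    Summable fun k : ℤ => if j < k then (2:ℝ) ^ (-k) * ((β k i : ℕ) : ℝ) else 0 := by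
  refine (summable_ite_lt_zpow_two j).of_norm_bounded fun k => ?_
  split_ifs
  · have hβ : ((β k i : ℕ) : ℝ) ≤ 1 := by exact_mod_cast Fin.is_le (β k i)
    rw [norm_mul, Real.norm_of_nonneg (by positivity), Real.norm_of_nonneg (by positivity)]
    exact mul_le_of_le_one_right (by positivity) hβ
  · simp

lemma shiftVec_sub_shiftVec (j : ℤ) (k : ℕ) (β : ℤ → Fin n → Fin 2) :
    shiftVec (j - k) β - shiftVec j β
      = fun i => ∑ m ∈ Finset.Ioc (j - k) j, (2:ℝ) ^ (-m) * ((β m i : ℕ) : ℝ) := by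
  funext i
  set t : ℤ → ℝ := fun m => (2:ℝ) ^ (-m) * ((β m i : ℕ) : ℝ)
  have hsplit : ∀ m : ℤ, (if j - k < m then t m else 0)
      = (if j < m then t m else 0) + (if m ∈ Finset.Ioc (j - k) j then t m else 0) := by
    intro m
    simp only [Finset.mem_Ioc]
    split_ifs <;> first | (exfalso; omega) | simp
  rw [Pi.sub_apply, sub_eq_iff_eq_add', shiftVec, shiftVec, tsum_congr hsplit,
    (summable_shiftVec_term j β i).tsum_add (summable_of_ne_finset_zero fun m hm => if_neg hm),
    tsum_eq_sum fun m hm => if_neg hm, Finset.sum_ite_mem, Finset.inter_self]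

lemma measurable_shiftVec (j : ℤ) : Measurable (shiftVec (n := n) j) := by
  refine measurable_pi_lambda _ fun i => Measurable.tsum fun k => ?_
  split_ifs
  · exact ((measurable_of_countable fun x : Fin n → Fin 2 => ((x i : ℕ) : ℝ)).comp
      (measurable_pi_apply k)).const_mul _
  · exact measurable_const

lemma dependsOn_shiftVec (j : ℤ) : DependsOn (shiftVec (n := n) j) (Ioi j) := fun β β' h =>
  funext fun i => tsum_congr fun k => by
    split_ifs with hk
    · rw [h k hk]
    · rfl

lemma dependsOn_shiftVec_sub_shiftVec (j : ℤ) (k : ℕ) :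
    DependsOn (fun β : ℤ → Fin n → Fin 2 => shiftVec (j - k) β - shiftVec j β)
      (Ioc (j - k) j) := fun β β' h => by
  simp only [shiftVec_sub_shiftVec]
  exact funext fun i => Finset.sum_congr rfl fun m hm => by rw [h m (by simpa using hm)]

lemma dyCube_add (j : ℤ) (q : Fin n → ℤ) (v c : Fin n → ℝ) :
    dyCube j q (v + c) = (· + c) '' dyCube j q v := by
  rw [Set.image_add_right]
  ext x
  simp only [dyCube, mem_preimage, mem_pi, mem_univ, true_implies, mem_Ico, Pi.add_apply,
    Pi.neg_apply]
  exact forall_congr' fun i => by constructor <;> rintro ⟨h₁, h₂⟩ <;> constructor <;> linarith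

lemma setDist_image_add_right (c : Fin n → ℝ) (s t : Set (Fin n → ℝ)) :
    setDist ((· + c) '' s) ((· + c) '' t) = setDist s t := by
  unfold setDist
  rw [iInf_image]
  exact congrArg _ <| iInf_congr fun x => iInf_congr fun _ =>
    Metric.infEDist_image (isometry_add_right c)

lemma dyCube_subset_and_setDist_compl_le_iff (j j' : ℤ) (q q' : Fin n → ℤ) (v w : Fin n → ℝ)
    (D : ℝ) :
    (dyCube j q v ⊆ dyCube j' q' w ∧ setDist (dyCube j q v) (dyCube j' q' w)ᶜ ≤ D) ↔
      (dyCube j q 0 ⊆ dyCube j' q' (w - v) ∧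
        setDist (dyCube j q 0) (dyCube j' q' (w - v))ᶜ ≤ D) := by
  have hbij : Function.Bijective (· + v) := (Equiv.addRight v).bijective
  conv_lhs => rw [← zero_add v, ← sub_add_cancel w v, dyCube_add, dyCube_add]
  rw [image_subset_image_iff hbij.injective, ← image_compl_eq hbij, setDist_image_add_right]

def IsNearBoundaryAncestor (γ : ℝ) (β : ℤ → Fin n → Fin 2) (j : ℤ) (q : Fin n → ℤ) (k : ℕ) :
    Prop :=
  ∃ q' : Fin n → ℤ,
    dyCube j q (shiftVec j β) ⊆ dyCube (j - k) q' (shiftVec (j - k) β) ∧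
    setDist (dyCube j q (shiftVec j β)) (dyCube (j - k) q' (shiftVec (j - k) β))ᶜ
      ≤ ((2:ℝ)^(-j)) ^ γ * ((2:ℝ)^(-(j - (k:ℤ)))) ^ (1 - γ)

lemma badCube_iff (r : ℕ) (γ : ℝ) (β : ℤ → Fin n → Fin 2) (j : ℤ) (q : Fin n → ℤ) :
    BadCube r γ β j q ↔ ∃ k : ℕ, r ≤ k ∧ IsNearBoundaryAncestor γ β j q k :=
  Iff.rfl

lemma dependsOn_isNearBoundaryAncestor (γ : ℝ) (j : ℤ) (q : Fin n → ℤ) (k : ℕ) :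
    DependsOn (fun β => IsNearBoundaryAncestor γ β j q k) (Ioc (j - k) j) := fun β β' h => by
  have hshift : shiftVec (j - k) β - shiftVec j β = shiftVec (j - k) β' - shiftVec j β' :=
    dependsOn_shiftVec_sub_shiftVec j k h
  refine propext (exists_congr fun q' => ?_)
  rw [dyCube_subset_and_setDist_compl_le_iff _ _ _ _ (shiftVec j β),
    dyCube_subset_and_setDist_compl_le_iff _ _ _ _ (shiftVec j β'), hshift]

lemma dependsOn_badCube (r : ℕ) (γ : ℝ) (j : ℤ) (q : Fin n → ℤ) :
    DependsOn (fun β => BadCube r γ β j q) (Iic j) := fun β β' h => by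
  simp only [badCube_iff]
  exact propext <| exists_congr fun k => and_congr_right fun _ => Iff.of_eq <|
    dependsOn_isNearBoundaryAncestor γ j q k fun m hm => h m hm.2

lemma measurableSet_badCube (r : ℕ) (γ : ℝ) (j : ℤ) (q : Fin n → ℤ) :
    MeasurableSet {β : ℤ → Fin n → Fin 2 | BadCube r γ β j q} := by
  simp only [badCube_iff, ofPred_exists, ofPred_and]
  exact .iUnion fun k => (MeasurableSet.const _).inter
    (dependsOn_isNearBoundaryAncestor γ j q k).measurable_of_finite.setOf

end ShiftedCubes

theorem statement2_general
    (n : ℕ) (γ : ℝ) (r : ℕ)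
    {Ω : Type*} [mΩ : MeasurableSpace Ω] (P : Measure Ω)
    (B : ℤ → Ω → (Fin n → Fin 2))
    (hmeas : ∀ k, Measurable (B k))
    (hindep : iIndepFun B P)
    (j : ℤ) (q : Fin n → ℤ) :
    MeasurableSet[MeasurableSpace.comap
        (fun ω (i : {i : ℤ // i ≤ j}) => B i ω) inferInstance]
      {ω | BadCube r γ (fun i => B i ω) j q} ∧
    Measurable[MeasurableSpace.comap
        (fun ω (i : {i : ℤ // j < i}) => B i ω) inferInstance]
      (fun ω => shiftVec j (fun i => B i ω)) ∧
    Indep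
      (MeasurableSpace.comap (fun ω (i : {i : ℤ // i ≤ j}) => B i ω) inferInstance)
      (MeasurableSpace.comap (fun ω (i : {i : ℤ // j < i}) => B i ω) inferInstance)
      P :=
  ⟨@Measurable.setOf _ (.comap _ _) _ <|
      (dependsOn_badCube r γ j q).measurable_comap_restrict (measurableSet_badCube r γ j q).mem B,
    (dependsOn_shiftVec j).measurable_comap_restrict (measurable_shiftVec j) B,
    hindep.indep_comap_of_disjoint hmeas (Iic_disjoint_Ioi le_rfl)⟩

/-- the badness of the shifted cube `I+β` is measurable with respect to the
coordinates `β_i` with `2^{-i} ≥ ℓ(I)` (i.e. `i ≤ j`), the position of `I+β` is measurable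
with respect to the coordinates with `2^{-i} < ℓ(I)` (i.e. `i > j`), and under the i.i.d.
random choice of `β` these two families of coordinates are independent; in particular the
badness of `I+β` is independent of its position. -/
theorem statement2
    (n : ℕ) (hn : 1 ≤ n) (γ : ℝ) (hγ : γ ∈ Set.Ioo (0:ℝ) 1) (r : ℕ) (hr : 1 ≤ r)
    {Ω : Type*} [mΩ : MeasurableSpace Ω] (P : Measure Ω) [IsProbabilityMeasure P]
    (B : ℤ → Ω → (Fin n → Fin 2))
    (hmeas : ∀ k, Measurable (B k))
    (hindep : iIndepFun B P)
    (hunif : ∀ k s, P {ω | B k ω = s} = 1 / 2 ^ n)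
    (j : ℤ) (q : Fin n → ℤ) :
    MeasurableSet[MeasurableSpace.comap
        (fun ω (i : {i : ℤ // i ≤ j}) => B i ω) inferInstance]
      {ω | BadCube r γ (fun i => B i ω) j q} ∧
    Measurable[MeasurableSpace.comap
        (fun ω (i : {i : ℤ // j < i}) => B i ω) inferInstance]
      (fun ω => shiftVec j (fun i => B i ω)) ∧
    Indep
      (MeasurableSpace.comap (fun ω (i : {i : ℤ // i ≤ j}) => B i ω) inferInstance)
      (MeasurableSpace.comap (fun ω (i : {i : ℤ // j < i}) => B i ω) inferInstance)
      P :=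
  statement2_general n γ r (mΩ := mΩ) P B hmeas hindep j q

end
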